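/- arXiv:2603.14776 — 3 statements merged into one kernel-verified Lean document; each statement's English description precedes it below -/
import Mathlib

section
/- Variation of the discrete Green function along a foliation: for any vertices x,y of Γ and any n ≥ 1, G_n(x,y) − G_{n−1}(x,y) = Σ_{ξ ∈ V(γ_n)} P_n(x,ξ) G_n(ξ,y), where G_n is the Green function of the growth cluster Γ_n, γ_n the n-th foliating layer, and P_n the Poisson kernel of Γ_n relative to γ_n. -/
open scoped BigOperators
open MeasureTheory ProbabilityTheory

attribute [local instance] Classical.propDecidable

noncomputable section

/-- A connected, locally finite graph with a positive symmetric conductance. -/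
structure WeightedGraph (V : Type) where
  adj : V → V → Prop
  symm : ∀ {x y}, adj x y → adj y x
  irrefl : ∀ x, ¬ adj x x
  locFin : ∀ x, {y | adj x y}.Finite
  connected : ∀ x y, Relation.ReflTransGen adj x y
  c : V → V → ℝ
  c_pos : ∀ {x y}, adj x y → 0 < c x y
  c_symm : ∀ x y, c x y = c y x
  c_eq_zero : ∀ {x y}, ¬ adj x y → c x y = 0

variable {V : Type}

/-- Weighted coboundary operator: `(df)(x,y) = √c(x,y) (f x - f y)`. -/
noncomputable def dd (G : WeightedGraph V) (f : V → ℝ) : V × V → ℝ :=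
  fun e => Real.sqrt (G.c e.1 e.2) * (f e.1 - f e.2)

/-- Weighted boundary operator: `(d*φ)(x) = Σ_{e : e⁻ = x} √c(e) φ(e)`. -/
noncomputable def dstar (G : WeightedGraph V) (φ : V × V → ℝ) : V → ℝ :=
  fun x => ∑ᶠ y ∈ {y | G.adj x y}, Real.sqrt (G.c x y) * φ (x, y)

/-- The weighted graph Laplacian `d*d`. -/
noncomputable def lap (G : WeightedGraph V) (f : V → ℝ) : V → ℝ :=
  fun x => ∑ᶠ y ∈ {y | G.adj x y}, G.c x y * (f x - f y)

/-- Stationary distribution `π(x) = Σ_{y ∼ x} c(x,y)`. -/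
noncomputable def piw (G : WeightedGraph V) (x : V) : ℝ :=
  ∑ᶠ y ∈ {y | G.adj x y}, G.c x y

/-- `E_U`: edges with at least one endpoint in `U`. -/
def edgesOf (G : WeightedGraph V) (U : Set V) : Set (V × V) :=
  {e | G.adj e.1 e.2 ∧ (e.1 ∈ U ∨ e.2 ∈ U)}

/-- Dirichlet (energy) inner product `⟨f,g⟩_{∇,U} = (1/2) Σ_{e ∈ E_U} df(e) dg(e)`. -/
noncomputable def dirInner (G : WeightedGraph V) (U : Set V) (f g : V → ℝ) : ℝ :=
  (1/2) * ∑ᶠ e ∈ edgesOf G U, dd G f e * dd G g e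

/-- `ℓ²(U)` inner product `⟨f,g⟩_U = Σ_{x ∈ U} f x * g x`. -/
noncomputable def l2Inner (U : Set V) (f g : V → ℝ) : ℝ := ∑ᶠ x ∈ U, f x * g x

/-- Dirichlet Laplacian `Δ_U f = 1_U · d*d f`. -/
noncomputable def dirLap (G : WeightedGraph V) (U : Set V) (f : V → ℝ) : V → ℝ :=
  fun x => if x ∈ U then lap G f x else 0

/-- `GU` is the discrete Green function of `U`:
`d*d G_U(·,y) = π(y) δ_y` on `U`, vanishing off `U`, and `G_U(·,y) = 0` for `y ∉ U`. -/
def IsGreen (G : WeightedGraph V) (U : Set V) (GU : V → V → ℝ) : Prop :=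
  (∀ y, y ∉ U → ∀ x, GU x y = 0) ∧
  (∀ y ∈ U, (∀ x, x ∉ U → GU x y = 0) ∧
    ∀ x ∈ U, lap G (fun z => GU z y) x = piw G y * (if x = y then 1 else 0))

/-- `P` is the discrete Poisson kernel of `U` relative to `W ⊂ U`:
`P(·,ξ)` is harmonic on `U \ W`, equals `δ_ξ` on `W`, vanishes off `U`. -/
def IsPoisson (G : WeightedGraph V) (U W : Set V) (P : V → V → ℝ) : Prop :=
  ∀ ξ ∈ W, (∀ x ∈ U \ W, lap G (fun z => P z ξ) x = 0) ∧
    (∀ x ∈ W, P x ξ = (if x = ξ then 1 else 0)) ∧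
    (∀ x, x ∉ U → P x ξ = 0)

/-- A discrete foliation of the weighted graph `G`, given by its layers of vertices. -/
structure DiscreteFoliation (G : WeightedGraph V) where
  layer : ℕ → Set V
  layer_nonempty : ∀ n, (layer n).Nonempty
  layer_finite : ∀ n, (layer n).Finite
  layer_disjoint : ∀ m n, m ≠ n → Disjoint (layer m) (layer n)
  layer_cover : ∀ x, ∃ n, x ∈ layer n
  adj_zero : ∀ x ∈ layer 0, ∀ y, G.adj x y → y ∈ layer 0 ∪ layer 1
  adj_succ : ∀ n, ∀ x ∈ layer (n + 1), ∀ y, G.adj x y →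
    y ∈ layer n ∪ layer (n + 1) ∪ layer (n + 2)

/-- The growth cluster `Γ_n`: union of the layers `γ_0, …, γ_n`. -/
def cluster {G : WeightedGraph V} (F : DiscreteFoliation G) (n : ℕ) : Set V :=
  ⋃ k ≤ n, F.layer k

/-- `R m` is the symmetric positive semidefinite square-root kernel of the
boundary normalized Green operator `G̃^⟨m⟩` on `ℓ²(V(γ_m))`. -/
def IsSqrtBoundaryGreen {G : WeightedGraph V} (F : DiscreteFoliation G)
    (Gm : V → V → ℝ) (m : ℕ) (R : V → V → ℝ) : Prop :=
  (∀ x y, x ∈ F.layer m → y ∈ F.layer m → R x y = R y x) ∧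
  (∀ x y, x ∉ F.layer m ∨ y ∉ F.layer m → R x y = 0) ∧
  (∀ f : V → ℝ, Function.support f ⊆ F.layer m →
    0 ≤ ∑ᶠ x ∈ F.layer m, (∑ᶠ y ∈ F.layer m, R x y * f y) * f x) ∧
  (∀ x ∈ F.layer m, ∀ y ∈ F.layer m,
    ∑ᶠ σ ∈ F.layer m, R x σ * R σ y = Gm x y / piw G y)

/-- The Hadamard kernel `K_m(x,ξ) = Σ_{η ∈ γ_m} P_m(x,η) R̃_m(η,ξ)`. -/
noncomputable def hadK {G : WeightedGraph V} (F : DiscreteFoliation G)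
    (P R : ℕ → V → V → ℝ) (m : ℕ) (x ξ : V) : ℝ :=
  ∑ᶠ η ∈ F.layer m, P m x η * R m η ξ

/-- The Hadamard operator `Q_n f (x) = Σ_{y ∈ V(Γ_n)} K_{t(y)}(x,y) f(y)`. -/
noncomputable def hadQ {G : WeightedGraph V} (F : DiscreteFoliation G)
    (P R : ℕ → V → V → ℝ) (t : V → ℕ) (n : ℕ) (f : V → ℝ) : V → ℝ :=
  fun x => ∑ᶠ y ∈ cluster F n, hadK F P R (t y) x y * f y

/-- The adjoint Hadamard operator `Q_n* f (x) = Σ_{y ∈ V(Γ_n)} K_{t(x)}(y,x) f(y)`. -/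
noncomputable def hadQstar {G : WeightedGraph V} (F : DiscreteFoliation G)
    (P R : ℕ → V → V → ℝ) (t : V → ℕ) (n : ℕ) (f : V → ℝ) : V → ℝ :=
  fun x => ∑ᶠ y ∈ cluster F n, hadK F P R (t x) y x * f y

/-! ### Auxiliary lemmas -/

lemma lap_eq (G : WeightedGraph V) (f : V → ℝ) (x : V) :
    lap G f x = ∑ z ∈ (G.locFin x).toFinset, G.c x z * (f x - f z) := by
  unfold lap
  rw [← finsum_mem_coe_finset, (G.locFin x).coe_toFinset]

lemma lap_sub (G : WeightedGraph V) (f g : V → ℝ) (x : V) :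
    lap G (fun z => f z - g z) x = lap G f x - lap G g x := by
  simp only [lap_eq, ← Finset.sum_sub_distrib]
  apply Finset.sum_congr rfl
  intro z _
  ring

lemma lap_zero_of (G : WeightedGraph V) (f : V → ℝ) (hf : ∀ z, f z = 0) (x : V) :
    lap G f x = 0 := by
  simp [lap_eq, hf]

lemma lap_neg (G : WeightedGraph V) (f : V → ℝ) (x : V) :
    lap G (fun z => -f z) x = - lap G f x := by
  simp only [lap_eq, ← Finset.sum_neg_distrib]
  apply Finset.sum_congr rfl
  intro z _
  ring

lemma lap_mul_const (G : WeightedGraph V) (f : V → ℝ) (a : ℝ) (x : V) :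
    lap G (fun z => f z * a) x = lap G f x * a := by
  simp only [lap_eq, Finset.sum_mul]
  apply Finset.sum_congr rfl
  intro z _
  ring

lemma lap_finset_sum (G : WeightedGraph V) {ι : Type*} (s : Finset ι)
    (f : ι → V → ℝ) (x : V) :
    lap G (fun z => ∑ i ∈ s, f i z) x = ∑ i ∈ s, lap G (f i) x := by
  simp only [lap_eq]
  rw [Finset.sum_comm]
  apply Finset.sum_congr rfl
  intro z _
  rw [← Finset.sum_sub_distrib, Finset.mul_sum]

lemma mem_cluster_iff {G : WeightedGraph V} (F : DiscreteFoliation G) (n : ℕ) (x : V) :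
    x ∈ cluster F n ↔ ∃ k ≤ n, x ∈ F.layer k := by
  simp [cluster]

lemma layer_subset_cluster {G : WeightedGraph V} (F : DiscreteFoliation G)
    {k n : ℕ} (hk : k ≤ n) : F.layer k ⊆ cluster F n := by
  intro x hx
  exact (mem_cluster_iff F n x).2 ⟨k, hk, hx⟩

lemma cluster_finite {G : WeightedGraph V} (F : DiscreteFoliation G) (n : ℕ) :
    (cluster F n).Finite := by
  have : cluster F n = ⋃ k ∈ Set.Iic n, F.layer k := by
    simp [cluster, Set.Iic]
  rw [this]
  exact (Set.finite_Iic n).biUnion (fun k _ => F.layer_finite k)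

lemma layer_not_mem_cluster {G : WeightedGraph V} (F : DiscreteFoliation G)
    {m n : ℕ} (hmn : m < n) {x : V} (hx : x ∈ F.layer n) : x ∉ cluster F m := by
  intro hc
  obtain ⟨k, hk, hxk⟩ := (mem_cluster_iff F m x).1 hc
  have hkn : k ≠ n := by omega
  exact (Set.disjoint_left.1 (F.layer_disjoint k n hkn)) hxk hx

lemma cluster_succ_eq {G : WeightedGraph V} (F : DiscreteFoliation G) (m : ℕ) :
    cluster F (m + 1) = cluster F m ∪ F.layer (m + 1) := by
  ext x
  simp only [mem_cluster_iff, Set.mem_union]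
  constructor
  · rintro ⟨k, hk, hxk⟩
    rcases Nat.lt_or_ge k (m + 1) with h | h
    · exact Or.inl ⟨k, by omega, hxk⟩
    · have : k = m + 1 := by omega
      exact Or.inr (this ▸ hxk)
  · rintro (⟨k, hk, hxk⟩ | hx)
    · exact ⟨k, by omega, hxk⟩
    · exact ⟨m + 1, le_refl _, hx⟩

lemma cluster_subset {G : WeightedGraph V} (F : DiscreteFoliation G)
    {m n : ℕ} (hmn : m ≤ n) : cluster F m ⊆ cluster F n := by
  intro x hx
  obtain ⟨k, hk, hxk⟩ := (mem_cluster_iff F m x).1 hx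
  exact (mem_cluster_iff F n x).2 ⟨k, le_trans hk hmn, hxk⟩

/-- Discrete maximum principle, one-sided version: a function harmonic on a
finite set `U` and vanishing off `U` is everywhere nonpositive, provided some
vertex lies outside `U`. -/
lemma harmonic_nonpos (G : WeightedGraph V) (U : Set V) (hU : U.Finite)
    (h : V → ℝ) (h0 : ∀ x, x ∉ U → h x = 0)
    (hharm : ∀ x ∈ U, lap G h x = 0)
    (z0 : V) (hz0 : z0 ∉ U) : ∀ x, h x ≤ 0 := by
  by_contra hcon
  push_neg at hcon
  obtain ⟨w, hw⟩ := hcon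
  have hwU : w ∈ U := by
    by_contra hwn
    rw [h0 w hwn] at hw
    exact lt_irrefl _ hw
  set s : Finset V := hU.toFinset with hs
  have hws : w ∈ s := hU.mem_toFinset.2 hwU
  have hne : s.Nonempty := ⟨w, hws⟩
  set M : ℝ := s.sup' hne h with hM
  have hMpos : 0 < M := lt_of_lt_of_le hw (Finset.le_sup' h hws)
  have hle : ∀ z, h z ≤ M := by
    intro z
    by_cases hz : z ∈ U
    · exact Finset.le_sup' h (hU.mem_toFinset.2 hz)
    · rw [h0 z hz]; exact le_of_lt hMpos
  obtain ⟨x0, hx0s, hx0⟩ := Finset.exists_mem_eq_sup' hne h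
  -- propagation of the maximum along paths
  have hprop : ∀ z, Relation.ReflTransGen G.adj x0 z → h z = M := by
    intro z hz
    induction hz with
    | refl => exact hx0.symm
    | tail hab hbc ih =>
      rename_i b cc
      have hbU : b ∈ U := by
        by_contra hbn
        rw [h0 b hbn] at ih
        exact lt_irrefl _ (ih ▸ hMpos)
      have hlap := hharm b hbU
      rw [lap_eq] at hlap
      have hnonneg : ∀ z ∈ (G.locFin b).toFinset, 0 ≤ G.c b z * (h b - h z) := by
        intro z hzmem
        have hadj : G.adj b z := (G.locFin b).mem_toFinset.1 hzmem
        have := hle z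
        have hc := G.c_pos hadj
        nlinarith [ih ▸ this]
      have hall := (Finset.sum_eq_zero_iff_of_nonneg hnonneg).1 hlap
      have hcmem : cc ∈ (G.locFin b).toFinset := (G.locFin b).mem_toFinset.2 hbc
      have := hall cc hcmem
      have hc := G.c_pos hbc
      have hsub : h b - h cc = 0 := by
        rcases mul_eq_zero.1 this with h1 | h1
        · exact absurd h1 (ne_of_gt hc)
        · exact h1
      linarith [ih, hsub]
  have hz0M := hprop z0 (G.connected x0 z0)
  rw [h0 z0 hz0] at hz0M
  exact absurd hz0M.symm (ne_of_gt hMpos)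

/-- Discrete maximum principle: a function harmonic on a finite set `U` and
vanishing off `U` vanishes identically, provided some vertex lies outside `U`. -/
lemma harmonic_eq_zero (G : WeightedGraph V) (U : Set V) (hU : U.Finite)
    (h : V → ℝ) (h0 : ∀ x, x ∉ U → h x = 0)
    (hharm : ∀ x ∈ U, lap G h x = 0)
    (z0 : V) (hz0 : z0 ∉ U) : ∀ x, h x = 0 := by
  have h1 := harmonic_nonpos G U hU h h0 hharm z0 hz0
  have h2 := harmonic_nonpos G U hU (fun z => -h z)
    (fun x hx => by simp [h0 x hx])
    (fun x hx => by rw [lap_neg, hharm x hx, neg_zero]) z0 hz0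
  intro x
  have := h1 x
  have := h2 x
  linarith

/-- variation of the discrete Green function along a foliation:
`G_n(x,y) - G_{n-1}(x,y) = Σ_{ξ ∈ V(γ_n)} P_n(x,ξ) G_n(ξ,y)`. -/
theorem green_variation (G : WeightedGraph V) (F : DiscreteFoliation G)
    (n : ℕ) (hn : 1 ≤ n)
    (Gn Gprev : V → V → ℝ)
    (hGn : IsGreen G (cluster F n) Gn)
    (hGprev : IsGreen G (cluster F (n - 1)) Gprev)
    (Pn : V → V → ℝ) (hPn : IsPoisson G (cluster F n) (F.layer n) Pn)
    (x y : V) :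
    Gn x y - Gprev x y = ∑ᶠ ξ ∈ F.layer n, Pn x ξ * Gn ξ y := by
  obtain ⟨m, rfl⟩ : ∃ m, n = m + 1 := ⟨n - 1, by omega⟩
  simp only [Nat.add_sub_cancel] at hGprev
  set s : Finset V := (F.layer_finite (m + 1)).toFinset with hs
  have hmemW : ∀ ξ ∈ s, ξ ∈ F.layer (m + 1) :=
    fun ξ hξ => (F.layer_finite (m + 1)).mem_toFinset.1 hξ
  have hUW : cluster F (m + 1) = cluster F m ∪ F.layer (m + 1) := cluster_succ_eq F m
  have hWdisj : ∀ z ∈ F.layer (m + 1), z ∉ cluster F m :=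
    fun z hz => layer_not_mem_cluster F (Nat.lt_succ_self m) hz
  have hGnz : ∀ z, z ∉ cluster F (m + 1) → Gn z y = 0 := by
    intro z hz
    by_cases hy : y ∈ cluster F (m + 1)
    · exact (hGn.2 y hy).1 z hz
    · exact hGn.1 y hy z
  have hGpz : ∀ z, z ∉ cluster F m → Gprev z y = 0 := by
    intro z hz
    by_cases hy : y ∈ cluster F m
    · exact (hGprev.2 y hy).1 z hz
    · exact hGprev.1 y hy z
  -- the difference function vanishes off `cluster F m`
  have h0 : ∀ z, z ∉ cluster F m →
      Gn z y - Gprev z y - ∑ ξ ∈ s, Pn z ξ * Gn ξ y = 0 := by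
    intro z hz
    by_cases hzU : z ∈ cluster F (m + 1)
    · have hzW : z ∈ F.layer (m + 1) := by
        rw [hUW] at hzU
        rcases hzU with h1 | h1
        · exact absurd h1 hz
        · exact h1
      have hsum : ∑ ξ ∈ s, Pn z ξ * Gn ξ y = Gn z y := by
        have hrw : ∀ ξ ∈ s, Pn z ξ * Gn ξ y = if z = ξ then Gn ξ y else 0 := by
          intro ξ hξ
          rw [(hPn ξ (hmemW ξ hξ)).2.1 z hzW, ite_mul, one_mul, zero_mul]
        rw [Finset.sum_congr rfl hrw, Finset.sum_ite_eq]
        simp [hs, hzW, (F.layer_finite (m + 1)).mem_toFinset.2 hzW]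
      rw [hsum, hGpz z hz]
      ring
    · have hPz : ∀ ξ ∈ s, Pn z ξ * Gn ξ y = 0 := by
        intro ξ hξ
        rw [(hPn ξ (hmemW ξ hξ)).2.2 z hzU, zero_mul]
      rw [hGnz z hzU, hGpz z hz, Finset.sum_eq_zero hPz]
      ring
  -- the difference function is harmonic on `cluster F m`
  have hharm : ∀ z ∈ cluster F m,
      lap G (fun w => Gn w y - Gprev w y - ∑ ξ ∈ s, Pn w ξ * Gn ξ y) z = 0 := by
    intro z hz
    have hzU : z ∈ cluster F (m + 1) := cluster_subset F (Nat.le_succ m) hz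
    have hzW : z ∉ F.layer (m + 1) := fun hw => hWdisj z hw hz
    have e1 : lap G (fun w => Gn w y - Gprev w y - ∑ ξ ∈ s, Pn w ξ * Gn ξ y) z =
        lap G (fun w => Gn w y) z - lap G (fun w => Gprev w y) z -
          lap G (fun w => ∑ ξ ∈ s, Pn w ξ * Gn ξ y) z := by
      rw [lap_sub G (fun w => Gn w y - Gprev w y) (fun w => ∑ ξ ∈ s, Pn w ξ * Gn ξ y) z,
        lap_sub G (fun w => Gn w y) (fun w => Gprev w y) z]
    have ePois : lap G (fun w => ∑ ξ ∈ s, Pn w ξ * Gn ξ y) z = 0 := by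
      rw [lap_finset_sum G s (fun ξ w => Pn w ξ * Gn ξ y) z]
      apply Finset.sum_eq_zero
      intro ξ hξ
      rw [lap_mul_const G (fun w => Pn w ξ) (Gn ξ y) z,
        (hPn ξ (hmemW ξ hξ)).1 z ⟨hzU, hzW⟩, zero_mul]
    rw [e1, ePois]
    by_cases hyU : y ∈ cluster F (m + 1)
    · have t1 : lap G (fun w => Gn w y) z = piw G y * (if z = y then 1 else 0) :=
        (hGn.2 y hyU).2 z hzU
      by_cases hyUp : y ∈ cluster F m
      · have t2 : lap G (fun w => Gprev w y) z = piw G y * (if z = y then 1 else 0) :=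
          (hGprev.2 y hyUp).2 z hz
        rw [t1, t2]
        ring
      · have hyW : y ∈ F.layer (m + 1) := by
          rw [hUW] at hyU
          rcases hyU with h1 | h1
          · exact absurd h1 hyUp
          · exact h1
        have hzy : z ≠ y := fun he => hzW (he ▸ hyW)
        have t2 : lap G (fun w => Gprev w y) z = 0 :=
          lap_zero_of G _ (fun w => hGprev.1 y hyUp w) z
        rw [t1, t2, if_neg hzy]
        ring
    · have hyUp : y ∉ cluster F m := fun hc => hyU (cluster_subset F (Nat.le_succ m) hc)
      have t1 : lap G (fun w => Gn w y) z = 0 :=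
        lap_zero_of G _ (fun w => hGn.1 y hyU w) z
      have t2 : lap G (fun w => Gprev w y) z = 0 :=
        lap_zero_of G _ (fun w => hGprev.1 y hyUp w) z
      rw [t1, t2]
      ring
  obtain ⟨z0, hz0W⟩ := F.layer_nonempty (m + 1)
  have hz0 : z0 ∉ cluster F m := hWdisj z0 hz0W
  have hzero := harmonic_eq_zero G (cluster F m) (cluster_finite F m)
    (fun w => Gn w y - Gprev w y - ∑ ξ ∈ s, Pn w ξ * Gn ξ y) h0 hharm z0 hz0
  have hfin : (∑ᶠ ξ ∈ F.layer (m + 1), Pn x ξ * Gn ξ y) = ∑ ξ ∈ s, Pn x ξ * Gn ξ y := by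
    rw [← finsum_mem_coe_finset, (F.layer_finite (m + 1)).coe_toFinset]
  rw [hfin]
  have := hzero x
  linarith
end
end

section
/- The boundary normalized Green operator G̃^⟨n⟩ on ℓ²(V(γ_n)), defined by (G̃^⟨n⟩ f)(x) = Σ_{y∈V(γ_n)} G_n(x,y) f(y)/π(y), is symmetric with strictly positive eigenvalues; in particular it is invertible on ℓ²(V(γ_n)). -/
open scoped BigOperators
open MeasureTheory ProbabilityTheory

attribute [local instance] Classical.propDecidable

noncomputable section

variable {V : Type}

/-- The boundary normalized Green operator `G̃^⟨n⟩` on `ℓ²(V(γ_n))`. -/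
noncomputable def bdryGreenOp (G : WeightedGraph V) (F : DiscreteFoliation G)
    (Gn : V → V → ℝ) (n : ℕ) (f : V → ℝ) : V → ℝ :=
  fun x => ∑ᶠ y ∈ F.layer n, Gn x y * f y / piw G y

namespace BGaux

variable {V : Type}

lemma c_nonneg (G : WeightedGraph V) (x y : V) : 0 ≤ G.c x y := by
  by_cases h : G.adj x y
  · exact (G.c_pos h).le
  · rw [G.c_eq_zero h]

lemma lap_eq (G : WeightedGraph V) (f : V → ℝ) (x : V) :
    lap G f x = ∑ y ∈ (G.locFin x).toFinset, G.c x y * (f x - f y) :=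
  finsum_mem_eq_finite_toFinset_sum _ (G.locFin x)

lemma piw_eq (G : WeightedGraph V) (x : V) :
    piw G x = ∑ y ∈ (G.locFin x).toFinset, G.c x y :=
  finsum_mem_eq_finite_toFinset_sum _ (G.locFin x)

lemma lap_sum (G : WeightedGraph V) (T : Finset V) (g : V → V → ℝ) (a : V → ℝ) (x : V) :
    lap G (fun z => ∑ y ∈ T, g z y * a y) x
      = ∑ y ∈ T, lap G (fun z => g z y) x * a y := by
  simp only [lap_eq, Finset.sum_mul, ← Finset.sum_sub_distrib, Finset.mul_sum]
  rw [Finset.sum_comm]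
  exact Finset.sum_congr rfl fun y _ => Finset.sum_congr rfl fun z _ => by ring

lemma sum_mul_lap (G : WeightedGraph V) (S : Finset V) (f g : V → ℝ)
    (hfN : ∀ x, f x ≠ 0 → ∀ y, G.adj x y → y ∈ S) :
    ∑ x ∈ S, f x * lap G g x
      = ∑ x ∈ S, ∑ y ∈ S, G.c x y * (f x * (g x - g y)) := by
  refine Finset.sum_congr rfl fun x _ => ?_
  by_cases hfx : f x = 0
  · simp [hfx]
  · rw [lap_eq, Finset.mul_sum,
      Finset.sum_subset (fun y hy => hfN x hfx y ((G.locFin x).mem_toFinset.mp hy))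
        (fun y _ hy => by
          rw [G.c_eq_zero (fun h => hy ((G.locFin x).mem_toFinset.mpr h))]; ring)]
    exact Finset.sum_congr rfl fun y _ => by ring

lemma double_sum_symm (G : WeightedGraph V) (S : Finset V) (f g : V → ℝ) :
    ∑ x ∈ S, ∑ y ∈ S, G.c x y * (f x * (g x - g y))
      = (1/2) * ∑ x ∈ S, ∑ y ∈ S, G.c x y * ((f x - f y) * (g x - g y)) := by
  have key : ∑ x ∈ S, ∑ y ∈ S, G.c x y * (f y * (g x - g y))
      = - ∑ x ∈ S, ∑ y ∈ S, G.c x y * (f x * (g x - g y)) := by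
    rw [Finset.sum_comm]
    simp only [← Finset.sum_neg_distrib]
    refine Finset.sum_congr rfl fun a _ => Finset.sum_congr rfl fun b _ => ?_
    rw [G.c_symm]; ring
  have expand : ∑ x ∈ S, ∑ y ∈ S, G.c x y * ((f x - f y) * (g x - g y))
      = ∑ x ∈ S, ∑ y ∈ S, G.c x y * (f x * (g x - g y))
        - ∑ x ∈ S, ∑ y ∈ S, G.c x y * (f y * (g x - g y)) := by
    rw [← Finset.sum_sub_distrib]
    refine Finset.sum_congr rfl fun a _ => ?_
    rw [← Finset.sum_sub_distrib]
    exact Finset.sum_congr rfl fun b _ => by ring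
  rw [expand, key]; ring

lemma green_identity (G : WeightedGraph V) (S : Finset V) (f g : V → ℝ)
    (hfN : ∀ x, f x ≠ 0 → ∀ y, G.adj x y → y ∈ S) :
    ∑ x ∈ S, f x * lap G g x
      = (1/2) * ∑ x ∈ S, ∑ y ∈ S, G.c x y * ((f x - f y) * (g x - g y)) := by
  rw [sum_mul_lap G S f g hfN, double_sum_symm]

lemma green_symm (G : WeightedGraph V) (S : Finset V) (f g : V → ℝ)
    (hfN : ∀ x, f x ≠ 0 → ∀ y, G.adj x y → y ∈ S)
    (hgN : ∀ x, g x ≠ 0 → ∀ y, G.adj x y → y ∈ S) :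
    ∑ x ∈ S, f x * lap G g x = ∑ x ∈ S, g x * lap G f x := by
  rw [green_identity G S f g hfN, green_identity G S g f hgN]
  congr 1
  exact Finset.sum_congr rfl fun a _ => Finset.sum_congr rfl fun b _ => by ring

lemma energy_nonneg (G : WeightedGraph V) (S : Finset V) (f : V → ℝ)
    (hfN : ∀ x, f x ≠ 0 → ∀ y, G.adj x y → y ∈ S) :
    0 ≤ ∑ x ∈ S, f x * lap G f x := by
  rw [green_identity G S f f hfN]
  have : 0 ≤ ∑ x ∈ S, ∑ y ∈ S, G.c x y * ((f x - f y) * (f x - f y)) :=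
    Finset.sum_nonneg fun x _ => Finset.sum_nonneg fun y _ =>
      mul_nonneg (c_nonneg G x y) (mul_self_nonneg _)
  linarith

lemma energy_zero (G : WeightedGraph V) (S : Finset V) (f : V → ℝ)
    (hfS : ∀ x, f x ≠ 0 → x ∈ S)
    (hfN : ∀ x, f x ≠ 0 → ∀ y, G.adj x y → y ∈ S)
    (h0 : ∑ x ∈ S, f x * lap G f x = 0)
    (v : V) (hv : f v = 0) : f = 0 := by
  rw [green_identity G S f f hfN] at h0
  have h0' : ∑ x ∈ S, ∑ y ∈ S, G.c x y * ((f x - f y) * (f x - f y)) = 0 := by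
    linarith
  have hterm : ∀ x ∈ S, ∀ y ∈ S, G.c x y * ((f x - f y) * (f x - f y)) = 0 := by
    have h1 := (Finset.sum_eq_zero_iff_of_nonneg fun x _ =>
      Finset.sum_nonneg fun y _ =>
        mul_nonneg (c_nonneg G x y) (mul_self_nonneg _)).mp h0'
    intro x hx y hy
    exact (Finset.sum_eq_zero_iff_of_nonneg fun y _ =>
      mul_nonneg (c_nonneg G x y) (mul_self_nonneg _)).mp (h1 x hx) y hy
  have hadjconst : ∀ x y, G.adj x y → f x = f y := by
    intro x y hadj
    by_contra hne
    have hor : f x ≠ 0 ∨ f y ≠ 0 := by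
      by_contra h
      push_neg at h
      exact hne (h.1.trans h.2.symm)
    have hxy : x ∈ S ∧ y ∈ S := by
      rcases hor with h | h
      · exact ⟨hfS x h, hfN x h y hadj⟩
      · exact ⟨hfN y h x (G.symm hadj), hfS y h⟩
    have := hterm x hxy.1 y hxy.2
    have hc := G.c_pos hadj
    have : (f x - f y) * (f x - f y) = 0 := by
      rcases mul_eq_zero.mp this with h | h
      · exact absurd h hc.ne'
      · exact h
    exact hne (sub_eq_zero.mp (mul_self_eq_zero.mp this))
  have hconst : ∀ x y : V, Relation.ReflTransGen G.adj x y → f x = f y := by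
    intro x y h
    induction h with
    | refl => rfl
    | tail _ hadj ih => exact ih.trans (hadjconst _ _ hadj)
  funext x
  exact (hconst v x (G.connected v x)).symm.trans hv

lemma cluster_finite {G : WeightedGraph V} (F : DiscreteFoliation G) (n : ℕ) :
    (cluster F n).Finite := by
  have : cluster F n = ⋃ k ∈ Set.Iic n, F.layer k := rfl
  rw [this]
  exact Set.Finite.biUnion (Set.finite_Iic n) fun k _ => F.layer_finite k

lemma layer_subset_cluster {G : WeightedGraph V} (F : DiscreteFoliation G) (n : ℕ) :
    F.layer n ⊆ cluster F n := fun x hx => Set.mem_iUnion₂.mpr ⟨n, le_refl n, hx⟩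

lemma succ_notMem_cluster {G : WeightedGraph V} (F : DiscreteFoliation G) (n : ℕ)
    {b : V} (hb : b ∈ F.layer (n + 1)) : b ∉ cluster F n := by
  intro h
  obtain ⟨k, hk, hbk⟩ := Set.mem_iUnion₂.mp h
  exact Set.disjoint_left.mp (F.layer_disjoint k (n + 1) (by omega)) hbk hb

lemma exists_adj (G : WeightedGraph V) (y z : V) (hne : z ≠ y) : ∃ w, G.adj y w := by
  rcases (G.connected y z).cases_head with h | ⟨c, hc, _⟩
  · exact absurd h.symm hne
  · exact ⟨c, hc⟩

lemma piw_pos (G : WeightedGraph V) (y : V) (h : ∃ w, G.adj y w) : 0 < piw G y := by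
  rw [piw_eq]
  obtain ⟨w, hw⟩ := h
  exact Finset.sum_pos (fun z hz => G.c_pos ((G.locFin y).mem_toFinset.mp hz))
    ⟨w, (G.locFin y).mem_toFinset.mpr hw⟩

end BGaux

/-- the boundary normalized Green operator `G̃^⟨n⟩` is symmetric and
positive definite (all eigenvalues strictly positive) on `ℓ²(V(γ_n))`; in particular
it is invertible (injective). -/
theorem bdryGreenOp_symm_posdef (G : WeightedGraph V) (F : DiscreteFoliation G)
    (n : ℕ) (Gn : V → V → ℝ) (hGn : IsGreen G (cluster F n) Gn) :
    (∀ f g : V → ℝ, Function.support f ⊆ F.layer n → Function.support g ⊆ F.layer n →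
      l2Inner (F.layer n) (bdryGreenOp G F Gn n f) g =
        l2Inner (F.layer n) f (bdryGreenOp G F Gn n g)) ∧
    (∀ f : V → ℝ, Function.support f ⊆ F.layer n → f ≠ 0 →
      0 < l2Inner (F.layer n) (bdryGreenOp G F Gn n f) f) ∧
    (∀ f : V → ℝ, Function.support f ⊆ F.layer n →
      (∀ x ∈ F.layer n, bdryGreenOp G F Gn n f x = 0) → f = 0) := by
  classical
  obtain ⟨a, ha⟩ := F.layer_nonempty n
  obtain ⟨b, hb⟩ := F.layer_nonempty (n + 1)
  have hUfin : (cluster F n).Finite := BGaux.cluster_finite F n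
  have hlayerU : F.layer n ⊆ cluster F n := BGaux.layer_subset_cluster F n
  have hbU : b ∉ cluster F n := BGaux.succ_notMem_cluster F n hb
  have hab : a ≠ b := fun h => hbU (h ▸ hlayerU ha)
  have hpiw : ∀ y : V, 0 < piw G y := by
    intro y
    by_cases h : y = a
    · exact BGaux.piw_pos G y (BGaux.exists_adj G y b (fun hby => hab (h ▸ hby).symm))
    · exact BGaux.piw_pos G y (BGaux.exists_adj G y a (fun hay => h hay.symm))
  obtain ⟨S, hUS, hNS⟩ : ∃ S : Finset V, (∀ x ∈ cluster F n, x ∈ S) ∧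
      (∀ x ∈ cluster F n, ∀ y, G.adj x y → y ∈ S) :=
    ⟨hUfin.toFinset ∪ hUfin.toFinset.biUnion fun x => (G.locFin x).toFinset,
     fun x hx => Finset.mem_union_left _ (hUfin.mem_toFinset.mpr hx),
     fun x hx y hy => Finset.mem_union_right _ (Finset.mem_biUnion.mpr
       ⟨x, hUfin.mem_toFinset.mpr hx, (G.locFin x).mem_toFinset.mpr hy⟩)⟩
  set T : Finset V := (F.layer_finite n).toFinset with hTdef
  have hTmem : ∀ y, y ∈ T ↔ y ∈ F.layer n := fun y => (F.layer_finite n).mem_toFinset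
  have hOp : ∀ (f : V → ℝ) (x : V),
      bdryGreenOp G F Gn n f x = ∑ y ∈ T, Gn x y * f y / piw G y := by
    intro f x
    simp only [bdryGreenOp]
    exact finsum_mem_eq_finite_toFinset_sum _ _
  have hsupp : ∀ (f : V → ℝ) (x : V), x ∉ cluster F n → bdryGreenOp G F Gn n f x = 0 := by
    intro f x hx
    rw [hOp]
    refine Finset.sum_eq_zero fun y hy => ?_
    rw [(hGn.2 y (hlayerU ((hTmem y).mp hy))).1 x hx]
    simp
  have hmemU : ∀ (f : V → ℝ) (x : V), bdryGreenOp G F Gn n f x ≠ 0 → x ∈ cluster F n := by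
    intro f x hx
    by_contra h
    exact hx (hsupp f x h)
  have hSf : ∀ (f : V → ℝ) (x : V), bdryGreenOp G F Gn n f x ≠ 0 → x ∈ S :=
    fun f x hx => hUS x (hmemU f x hx)
  have hNf : ∀ (f : V → ℝ) (x : V), bdryGreenOp G F Gn n f x ≠ 0 →
      ∀ y, G.adj x y → y ∈ S := fun f x hx y hy => hNS x (hmemU f x hx) y hy
  have hlap : ∀ (f : V → ℝ), Function.support f ⊆ F.layer n → ∀ x ∈ cluster F n,
      lap G (bdryGreenOp G F Gn n f) x = f x := by
    intro f hf x hx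
    have heq : bdryGreenOp G F Gn n f = fun z => ∑ y ∈ T, Gn z y * (f y / piw G y) := by
      funext z
      rw [hOp]
      exact Finset.sum_congr rfl fun y _ => mul_div_assoc _ _ _
    rw [heq, BGaux.lap_sum]
    have hterm : ∀ y ∈ T, lap G (fun z => Gn z y) x * (f y / piw G y)
        = if x = y then f y else 0 := by
      intro y hy
      rw [(hGn.2 y (hlayerU ((hTmem y).mp hy))).2 x hx]
      by_cases h : x = y
      · rw [if_pos h, if_pos h, mul_one, mul_comm (piw G y), div_mul_cancel₀ _ (hpiw y).ne']
      · rw [if_neg h, if_neg h, mul_zero, zero_mul]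
    rw [Finset.sum_congr rfl hterm, Finset.sum_ite_eq]
    by_cases h : x ∈ T
    · rw [if_pos h]
    · rw [if_neg h]
      exact (Function.support_subset_iff'.mp hf x (fun hxn => h ((hTmem x).mpr hxn))).symm
  have hrep : ∀ (f g : V → ℝ), Function.support g ⊆ F.layer n →
      l2Inner (F.layer n) (bdryGreenOp G F Gn n f) g
        = ∑ x ∈ S, bdryGreenOp G F Gn n f x * lap G (bdryGreenOp G F Gn n g) x := by
    intro f g hg
    have h1 : l2Inner (F.layer n) (bdryGreenOp G F Gn n f) g
        = ∑ x ∈ T, bdryGreenOp G F Gn n f x * g x := by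
      simp only [l2Inner]
      exact finsum_mem_eq_finite_toFinset_sum _ _
    rw [h1, Finset.sum_subset (fun x hx => hUS x (hlayerU ((hTmem x).mp hx)))
      (fun x _ hx => by
        rw [Function.support_subset_iff'.mp hg x (fun h => hx ((hTmem x).mpr h))]; ring)]
    refine Finset.sum_congr rfl fun x _ => ?_
    by_cases hh : bdryGreenOp G F Gn n f x = 0
    · rw [hh, zero_mul, zero_mul]
    · rw [hlap g hg x (hmemU f x hh)]
  have hzero : ∀ f : V → ℝ, Function.support f ⊆ F.layer n →
      l2Inner (F.layer n) (bdryGreenOp G F Gn n f) f = 0 → f = 0 := by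
    intro f hf h0
    rw [hrep f f hf] at h0
    have hh0 : bdryGreenOp G F Gn n f = 0 :=
      BGaux.energy_zero G S (bdryGreenOp G F Gn n f) (hSf f) (hNf f) h0 b (hsupp f b hbU)
    funext x
    show f x = 0
    by_cases hx : x ∈ cluster F n
    · rw [← hlap f hf x hx, hh0]
      simp [BGaux.lap_eq]
    · exact Function.support_subset_iff'.mp hf x (fun h => hx (hlayerU h))
  have hpos : ∀ f : V → ℝ, Function.support f ⊆ F.layer n → f ≠ 0 →
      0 < l2Inner (F.layer n) (bdryGreenOp G F Gn n f) f := by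
    intro f hf hfne
    have hge : 0 ≤ l2Inner (F.layer n) (bdryGreenOp G F Gn n f) f := by
      rw [hrep f f hf]
      exact BGaux.energy_nonneg G S _ (hNf f)
    rcases hge.lt_or_eq with h | h
    · exact h
    · exact absurd (hzero f hf h.symm) hfne
  refine ⟨?_, hpos, ?_⟩
  · intro f g hf hg
    have hcomm : l2Inner (F.layer n) f (bdryGreenOp G F Gn n g)
        = l2Inner (F.layer n) (bdryGreenOp G F Gn n g) f := by
      simp only [l2Inner]
      exact finsum_mem_congr rfl fun x _ => mul_comm _ _
    rw [hcomm, hrep f g hg, hrep g f hf]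
    exact BGaux.green_symm G S _ _ (hNf f) (hNf g)
  · intro f hf h0
    refine hzero f hf ?_
    have h1 : l2Inner (F.layer n) (bdryGreenOp G F Gn n f) f
        = ∑ x ∈ T, bdryGreenOp G F Gn n f x * f x := by
      simp only [l2Inner]
      exact finsum_mem_eq_finite_toFinset_sum _ _
    rw [h1]
    exact Finset.sum_eq_zero fun x hx => by rw [h0 x ((hTmem x).mp hx), zero_mul]

end
end

section
/- For fixed f ∈ ℓ²(V(Γ_N)) and Ψ_n = Q_nΦ the grown GFF, the Gaussian process (⟨f, Ψ_n⟩)_{n=0,…,N} has the same distribution as (B(‖Q_n* f‖²))_{n=0,…,N}, where B is a standard one-dimensional Brownian motion with B(0)=0; in particular E⟨f,Ψ_n⟩ = 0 and for n ≤ m, E[⟨f,Ψ_n⟩⟨f,Ψ_m⟩] = ‖Q_n* f‖²_{ℓ²(V(Γ_n))}. -/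
open scoped BigOperators
open MeasureTheory ProbabilityTheory

attribute [local instance] Classical.propDecidable

noncomputable section

variable {V : Type}

section GaussAux
open Real Filter


lemma myint_e : Integrable (fun x : ℝ => Real.exp (-(1/2) * x ^ 2)) :=
  integrable_exp_neg_mul_sq (by norm_num)

lemma myint_x2e : Integrable (fun x : ℝ => x ^ 2 * Real.exp (-(1/2) * x ^ 2)) := by
  have h := integrable_rpow_mul_exp_neg_mul_sq (b := 1/2) (by norm_num) (s := 2) (by norm_num)
  have : ∀ x : ℝ, x ^ (2:ℝ) = x ^ 2 := fun x => Real.rpow_two x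
  simpa [this] using h

lemma myint_xe : Integrable (fun x : ℝ => x * Real.exp (-(1/2) * x ^ 2)) := by
  have h := integrable_rpow_mul_exp_neg_mul_sq (b := 1/2) (by norm_num) (s := 1) (by norm_num)
  simpa [Real.rpow_one] using h

lemma tendsto_xe_top : Tendsto (fun x : ℝ => x * Real.exp (-(1/2) * x ^ 2)) atTop (nhds 0) := by
  have h := rpow_mul_exp_neg_mul_sq_isLittleO_exp_neg (b := 1/2) (by norm_num) 1
  simp only [Real.rpow_one] at h
  refine h.trans_tendsto ?_
  have : Tendsto (fun x : ℝ => -(1/2) * x) atTop atBot := by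
    apply Tendsto.const_mul_atTop_of_neg (by norm_num) tendsto_id
  exact Real.tendsto_exp_atBot.comp this

lemma key_sq_zero : ∫ x : ℝ, (x ^ 2 - 1) * Real.exp (-(1/2) * x ^ 2) = 0 := by
  set F : ℝ → ℝ := fun x => -x * Real.exp (-(1/2) * x ^ 2) with hF
  have hderiv : ∀ x : ℝ, HasDerivAt F ((x ^ 2 - 1) * Real.exp (-(1/2) * x ^ 2)) x := by
    intro x
    have h1 : HasDerivAt (fun y : ℝ => -(1/2) * y ^ 2) (-(1/2) * (2 * x)) x := by
      simpa using ((hasDerivAt_pow 2 x).const_mul (-(1/2 : ℝ)))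
    have h2 := h1.exp
    have h3 : HasDerivAt (fun y : ℝ => -y) (-1) x := (hasDerivAt_id x).neg
    have h := h3.mul h2
    exact (h.congr_deriv (by ring)).congr_of_eventuallyEq (Filter.Eventually.of_forall fun y => rfl)
  have hint : Integrable (fun x : ℝ => (x ^ 2 - 1) * Real.exp (-(1/2) * x ^ 2)) := by
    have : (fun x : ℝ => (x ^ 2 - 1) * Real.exp (-(1/2) * x ^ 2))
        = fun x => x ^ 2 * Real.exp (-(1/2) * x ^ 2) - Real.exp (-(1/2) * x ^ 2) := by
      funext x; ring
    rw [this]; exact myint_x2e.sub myint_e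
  have htop : Tendsto F atTop (nhds 0) := by
    have h := tendsto_xe_top.neg
    simp only [neg_zero] at h
    exact h.congr fun x => by
      show -(x * Real.exp (-(1/2) * x ^ 2)) = F x
      rw [hF]; ring
  have hbot : Tendsto F atBot (nhds 0) := by
    have h := tendsto_xe_top.comp tendsto_neg_atBot_atTop
    exact h.congr fun x => by
      show (-x) * Real.exp (-(1/2) * (-x) ^ 2) = F x
      rw [hF]; ring_nf
  have h1 := integral_Iic_of_hasDerivAt_of_tendsto' (a := 0) (fun x _ => hderiv x)
    hint.integrableOn hbot
  have h2 := integral_Ioi_of_hasDerivAt_of_tendsto' (a := 0) (fun x _ => hderiv x)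
    hint.integrableOn htop
  rw [← intervalIntegral.integral_Iic_add_Ioi (b := 0) hint.integrableOn hint.integrableOn, h1, h2]
  simp [hF]

lemma key_sq : ∫ x : ℝ, x ^ 2 * Real.exp (-(1/2) * x ^ 2) = Real.sqrt (2 * π) := by
  have h0 := key_sq_zero
  have hsub : (fun x : ℝ => (x ^ 2 - 1) * Real.exp (-(1/2) * x ^ 2))
      = fun x => x ^ 2 * Real.exp (-(1/2) * x ^ 2) - Real.exp (-(1/2) * x ^ 2) := by
    funext x; ring
  rw [hsub, integral_sub myint_x2e myint_e] at h0
  have hg : ∫ x : ℝ, Real.exp (-(1/2) * x ^ 2) = Real.sqrt (2 * π) := by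
    have := integral_gaussian (1/2)
    rw [this, show π / (1/2 : ℝ) = 2 * π by ring]
  linarith [h0, hg]

lemma pdf01_eq (x : ℝ) :
    gaussianPDFReal 0 1 x = (Real.sqrt (2 * π))⁻¹ * Real.exp (-(1/2) * x ^ 2) := by
  simp only [gaussianPDFReal, NNReal.coe_one, mul_one, sub_zero]
  rw [show -x ^ 2 / 2 = -(1/2) * x ^ 2 by ring]

lemma pdf01_meas : Measurable fun x : ℝ => (gaussianPDFReal 0 1 x).toNNReal :=
  (measurable_gaussianPDFReal 0 1).real_toNNReal

lemma gauss_withDensity :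
    gaussianReal 0 1 = volume.withDensity (fun x => ((gaussianPDFReal 0 1 x).toNNReal : ENNReal)) := by
  rw [gaussianReal_of_var_ne_zero _ one_ne_zero]
  rfl

lemma gauss_integral (g : ℝ → ℝ) :
    ∫ x, g x ∂(gaussianReal 0 1) = ∫ x, gaussianPDFReal 0 1 x * g x := by
  rw [gauss_withDensity, integral_withDensity_eq_integral_smul pdf01_meas]
  congr 1
  funext x
  simp [NNReal.smul_def, Real.coe_toNNReal _ (gaussianPDFReal_nonneg 0 1 x)]

lemma gauss_integrable (g : ℝ → ℝ)
    (hg : Integrable (fun x => gaussianPDFReal 0 1 x * g x) volume) :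
    Integrable g (gaussianReal 0 1) := by
  rw [gauss_withDensity, integrable_withDensity_iff_integrable_smul pdf01_meas]
  refine hg.congr ?_
  filter_upwards with x
  simp [NNReal.smul_def, Real.coe_toNNReal _ (gaussianPDFReal_nonneg 0 1 x)]

lemma gauss_int_id : Integrable (fun x : ℝ => x) (gaussianReal 0 1) := by
  refine gauss_integrable _ ?_
  have : (fun x : ℝ => gaussianPDFReal 0 1 x * x)
      = fun x => (Real.sqrt (2 * π))⁻¹ * (x * Real.exp (-(1/2) * x ^ 2)) := by
    funext x; rw [pdf01_eq]; ring
  rw [this]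
  exact myint_xe.const_mul _

lemma gauss_int_sq : Integrable (fun x : ℝ => x ^ 2) (gaussianReal 0 1) := by
  refine gauss_integrable _ ?_
  have : (fun x : ℝ => gaussianPDFReal 0 1 x * x ^ 2)
      = fun x => (Real.sqrt (2 * π))⁻¹ * (x ^ 2 * Real.exp (-(1/2) * x ^ 2)) := by
    funext x; rw [pdf01_eq]; ring
  rw [this]
  exact myint_x2e.const_mul _

lemma gauss_mean : ∫ x, x ∂(gaussianReal 0 1) = 0 := by
  rw [gauss_integral]
  have hodd : ∀ x : ℝ, gaussianPDFReal 0 1 (-x) * (-x) = -(gaussianPDFReal 0 1 x * x) := by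
    intro x; rw [pdf01_eq, pdf01_eq]; ring_nf
  have h := integral_neg_eq_self (fun x : ℝ => gaussianPDFReal 0 1 x * x) volume
  simp only [hodd, integral_neg] at h
  linarith

lemma gauss_second : ∫ x, x ^ 2 ∂(gaussianReal 0 1) = 1 := by
  rw [gauss_integral]
  have : (fun x : ℝ => gaussianPDFReal 0 1 x * x ^ 2)
      = fun x => (Real.sqrt (2 * π))⁻¹ * (x ^ 2 * Real.exp (-(1/2) * x ^ 2)) := by
    funext x; rw [pdf01_eq]; ring
  rw [this, integral_const_mul, key_sq, inv_mul_cancel₀]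
  positivity
end GaussAux

section GraphAux

lemma cluster_mono {G : WeightedGraph V} (F : DiscreteFoliation G) {n m : ℕ} (h : n ≤ m) :
    cluster F n ⊆ cluster F m := by
  intro x hx
  rw [cluster, Set.mem_iUnion₂] at hx ⊢
  obtain ⟨k, hk, hxk⟩ := hx
  exact ⟨k, hk.trans h, hxk⟩

lemma mem_cluster_t_le {G : WeightedGraph V} (F : DiscreteFoliation G) {t : V → ℕ}
    (ht : ∀ ξ, ξ ∈ F.layer (t ξ)) {n : ℕ} {y : V} (hy : y ∈ cluster F n) : t y ≤ n := by
  rw [cluster, Set.mem_iUnion₂] at hy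
  obtain ⟨k, hk, hyk⟩ := hy
  by_contra h
  have hne : k ≠ t y := by omega
  exact Set.disjoint_left.mp (F.layer_disjoint k (t y) hne) hyk (ht y)

lemma hadK_eq_zero {G : WeightedGraph V} (F : DiscreteFoliation G) {P R : ℕ → V → V → ℝ}
    (hP : ∀ m, IsPoisson G (cluster F m) (F.layer m) (P m)) (m : ℕ) {z : V}
    (hz : z ∉ cluster F m) (y : V) : hadK F P R m z y = 0 := by
  rw [hadK, finsum_mem_eq_finite_toFinset_sum _ (F.layer_finite m)]
  refine Finset.sum_eq_zero fun η hη => ?_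
  have hη' : η ∈ F.layer m := (F.layer_finite m).mem_toFinset.mp hη
  rw [(hP m η hη').2.2 z hz, zero_mul]

lemma qstar_agree {G : WeightedGraph V} (F : DiscreteFoliation G) {P R : ℕ → V → V → ℝ}
    (hP : ∀ m, IsPoisson G (cluster F m) (F.layer m) (P m)) {t : V → ℕ}
    (ht : ∀ ξ, ξ ∈ F.layer (t ξ)) (f : V → ℝ) {n m : ℕ} (hnm : n ≤ m) {y : V}
    (hy : y ∈ cluster F n) :
    hadQstar F P R t m f y = hadQstar F P R t n f y := by
  rw [hadQstar, hadQstar, finsum_mem_eq_finite_toFinset_sum _ (cluster_finite F n),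
    finsum_mem_eq_finite_toFinset_sum _ (cluster_finite F m)]
  refine (Finset.sum_subset ?_ ?_).symm
  · intro z hz
    exact (cluster_finite F m).mem_toFinset.mpr
      (cluster_mono F hnm ((cluster_finite F n).mem_toFinset.mp hz))
  · intro z hzm hzn
    have hzn' : z ∉ cluster F n := fun h => hzn ((cluster_finite F n).mem_toFinset.mpr h)
    have hty : t y ≤ n := mem_cluster_t_le F ht hy
    have hz' : z ∉ cluster F (t y) := fun h => hzn' (cluster_mono F hty h)
    rw [hadK_eq_zero F hP (t y) hz' y, zero_mul]

end GraphAux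

/-- for fixed `f ∈ ℓ²(V(Γ_N))`, the Gaussian process
`(⟨f, Ψ_n⟩)_{n=0,…,N}` has the same distribution as `(B(‖Q_n* f‖²))_n` for a
standard Brownian motion `B`; since equality in distribution of Gaussian vectors is
equality of means and covariances, this amounts to: `E⟨f,Ψ_n⟩ = 0` and, for
`n ≤ m ≤ N`, `E[⟨f,Ψ_n⟩ ⟨f,Ψ_m⟩] = ‖Q_n* f‖²_{ℓ²(V(Γ_n))}` (the Brownian-motion
covariance `min` structure evaluated at the times `‖Q_n* f‖²`). -/
theorem gff_pairing_brownian (G : WeightedGraph V) (F : DiscreteFoliation G)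
    (Gm : ℕ → V → V → ℝ) (hGm : ∀ m, IsGreen G (cluster F m) (Gm m))
    (P : ℕ → V → V → ℝ) (hP : ∀ m, IsPoisson G (cluster F m) (F.layer m) (P m))
    (R : ℕ → V → V → ℝ) (hR : ∀ m, IsSqrtBoundaryGreen F (Gm m) m (R m))
    (t : V → ℕ) (ht : ∀ ξ, ξ ∈ F.layer (t ξ)) (N : ℕ)
    {Ω : Type} [MeasurableSpace Ω] (μ : Measure Ω) [IsProbabilityMeasure μ]
    (ξ : V → Ω → ℝ) (hmeas : ∀ y, Measurable (ξ y))
    (hindep : iIndepFun ξ μ)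
    (hgauss : ∀ y, μ.map (ξ y) = gaussianReal 0 1)
    (Φ : V → Ω → ℝ)
    (hΦ : ∀ x ω, Φ x ω = if x ∈ cluster F N then ξ x ω else 0)
    (Ψ : ℕ → V → Ω → ℝ)
    (hΨ : ∀ n x ω, Ψ n x ω = hadQ F P R t n (fun z => Φ z ω) x)
    (f : V → ℝ) (hf : Function.support f ⊆ cluster F N) :
    (∀ n ≤ N, ∫ ω, (∑ᶠ x ∈ cluster F n, f x * Ψ n x ω) ∂μ = 0) ∧
    (∀ n m, n ≤ m → m ≤ N →
      ∫ ω, (∑ᶠ x ∈ cluster F n, f x * Ψ n x ω) *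
          (∑ᶠ x ∈ cluster F m, f x * Ψ m x ω) ∂μ =
        ∑ᶠ x ∈ cluster F n, (hadQstar F P R t n f x) ^ 2) := by
  classical
  -- basic facts about the Gaussian family ξ
  have hInt : ∀ y, Integrable (ξ y) μ := by
    intro y
    have hg1 : AEStronglyMeasurable (fun x : ℝ => x) (μ.map (ξ y)) :=
      measurable_id.aestronglyMeasurable
    have h1 : Integrable (fun x : ℝ => x) (μ.map (ξ y)) := by
      rw [hgauss y]; exact gauss_int_id
    rw [integrable_map_measure hg1 (hmeas y).aemeasurable] at h1
    exact h1
  have hMean : ∀ y, ∫ ω, ξ y ω ∂μ = 0 := by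
    intro y
    have hg1 : AEStronglyMeasurable (fun x : ℝ => x) (μ.map (ξ y)) :=
      measurable_id.aestronglyMeasurable
    have h1 : ∫ x, (fun x : ℝ => x) x ∂(μ.map (ξ y)) = ∫ ω, ξ y ω ∂μ :=
      integral_map (hmeas y).aemeasurable hg1
    rw [hgauss y] at h1
    rw [← h1]
    exact gauss_mean
  have hSqInt : ∀ y, Integrable (fun ω => ξ y ω ^ 2) μ := by
    intro y
    have hg2 : AEStronglyMeasurable (fun x : ℝ => x ^ 2) (μ.map (ξ y)) :=
      (measurable_id.pow_const 2).aestronglyMeasurable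
    have h1 : Integrable (fun x : ℝ => x ^ 2) (μ.map (ξ y)) := by
      rw [hgauss y]; exact gauss_int_sq
    rw [integrable_map_measure hg2 (hmeas y).aemeasurable] at h1
    exact h1
  have hSqVal : ∀ y, ∫ ω, ξ y ω ^ 2 ∂μ = 1 := by
    intro y
    have hg2 : AEStronglyMeasurable (fun x : ℝ => x ^ 2) (μ.map (ξ y)) :=
      (measurable_id.pow_const 2).aestronglyMeasurable
    have h1 : ∫ x, (fun x : ℝ => x ^ 2) x ∂(μ.map (ξ y)) = ∫ ω, ξ y ω ^ 2 ∂μ :=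
      integral_map (hmeas y).aemeasurable hg2
    rw [hgauss y] at h1
    rw [← h1]
    exact gauss_second
  have hmulInt : ∀ y z, Integrable (fun ω => ξ y ω * ξ z ω) μ := by
    intro y z
    by_cases h : y = z
    · subst h
      exact (hSqInt y).congr (Filter.Eventually.of_forall fun ω => (pow_two (ξ y ω)))
    · exact (hindep.indepFun h).integrable_mul (hInt y) (hInt z)
  have hCov : ∀ y z, ∫ ω, ξ y ω * ξ z ω ∂μ = if y = z then 1 else 0 := by
    intro y z
    by_cases h : y = z
    · subst h
      rw [if_pos rfl, ← hSqVal y]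
      refine integral_congr_ae (Filter.Eventually.of_forall fun ω => ?_)
      exact (pow_two (ξ y ω)).symm
    · rw [if_neg h]
      have := (hindep.indepFun h).integral_mul_eq_mul_integral (hInt y).aestronglyMeasurable (hInt z).aestronglyMeasurable
      have h2 : ∫ ω, ξ y ω * ξ z ω ∂μ = ∫ ω, (ξ y * ξ z) ω ∂μ := rfl
      rw [h2, this, hMean y, zero_mul]
  -- representation of the pairing as a finite Gaussian linear combination
  have pair_eq : ∀ n, n ≤ N → ∀ ω, (∑ᶠ x ∈ cluster F n, f x * Ψ n x ω)
      = ∑ y ∈ (cluster_finite F n).toFinset, hadQstar F P R t n f y * ξ y ω := by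
    intro n hn ω
    rw [finsum_mem_eq_finite_toFinset_sum _ (cluster_finite F n)]
    have hstep : ∀ x, Ψ n x ω
        = ∑ y ∈ (cluster_finite F n).toFinset, hadK F P R (t y) x y * ξ y ω := by
      intro x
      rw [hΨ, hadQ, finsum_mem_eq_finite_toFinset_sum _ (cluster_finite F n)]
      refine Finset.sum_congr rfl fun y hy => ?_
      have hyN : y ∈ cluster F N :=
        cluster_mono F hn ((cluster_finite F n).mem_toFinset.mp hy)
      rw [hΦ, if_pos hyN]
    calc ∑ x ∈ (cluster_finite F n).toFinset, f x * Ψ n x ω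
        = ∑ x ∈ (cluster_finite F n).toFinset, ∑ y ∈ (cluster_finite F n).toFinset,
            f x * (hadK F P R (t y) x y * ξ y ω) := by
          refine Finset.sum_congr rfl fun x hx => ?_
          rw [hstep, Finset.mul_sum]
      _ = ∑ y ∈ (cluster_finite F n).toFinset, ∑ x ∈ (cluster_finite F n).toFinset,
            hadK F P R (t y) x y * f x * ξ y ω := by
          rw [Finset.sum_comm]
          refine Finset.sum_congr rfl fun y _ => Finset.sum_congr rfl fun x _ => by ring
      _ = ∑ y ∈ (cluster_finite F n).toFinset, hadQstar F P R t n f y * ξ y ω := by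
          refine Finset.sum_congr rfl fun y hy => ?_
          rw [hadQstar, finsum_mem_eq_finite_toFinset_sum _ (cluster_finite F n), Finset.sum_mul]
  refine ⟨?_, ?_⟩
  · -- mean zero
    intro n hn
    calc ∫ ω, (∑ᶠ x ∈ cluster F n, f x * Ψ n x ω) ∂μ
        = ∫ ω, ∑ y ∈ (cluster_finite F n).toFinset,
            hadQstar F P R t n f y * ξ y ω ∂μ :=
          integral_congr_ae (Filter.Eventually.of_forall fun ω => pair_eq n hn ω)
      _ = ∑ y ∈ (cluster_finite F n).toFinset,
            ∫ ω, hadQstar F P R t n f y * ξ y ω ∂μ :=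
          integral_finset_sum _ (fun y _ => (hInt y).const_mul _)
      _ = 0 := by
          refine Finset.sum_eq_zero fun y _ => ?_
          rw [integral_const_mul, hMean y, mul_zero]
  · -- covariance
    intro n m hnm hm
    have hn : n ≤ N := hnm.trans hm
    set sn := (cluster_finite F n).toFinset with hsn
    set sm := (cluster_finite F m).toFinset with hsm
    set a : V → ℝ := hadQstar F P R t n f with ha
    set b : V → ℝ := hadQstar F P R t m f with hb
    have hsub : sn ⊆ sm := fun x hx =>
      (cluster_finite F m).mem_toFinset.mpr
        (cluster_mono F hnm ((cluster_finite F n).mem_toFinset.mp hx))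
    calc ∫ ω, (∑ᶠ x ∈ cluster F n, f x * Ψ n x ω) *
            (∑ᶠ x ∈ cluster F m, f x * Ψ m x ω) ∂μ
        = ∫ ω, ∑ y ∈ sn, ∑ z ∈ sm, (a y * b z) * (ξ y ω * ξ z ω) ∂μ := by
          refine integral_congr_ae (Filter.Eventually.of_forall fun ω => ?_)
          dsimp only
          rw [pair_eq n hn ω, pair_eq m hm ω, Finset.sum_mul_sum]
          exact Finset.sum_congr rfl fun y _ => Finset.sum_congr rfl fun z _ => by ring
      _ = ∑ y ∈ sn, ∑ z ∈ sm, (a y * b z) * ∫ ω, ξ y ω * ξ z ω ∂μ := by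
          rw [integral_finset_sum _ (fun y _ =>
            integrable_finset_sum _ (fun z _ => (hmulInt y z).const_mul _))]
          refine Finset.sum_congr rfl fun y _ => ?_
          rw [integral_finset_sum _ (fun z _ => (hmulInt y z).const_mul _)]
          exact Finset.sum_congr rfl fun z _ => integral_const_mul _ _
      _ = ∑ y ∈ sn, a y * b y := by
          refine Finset.sum_congr rfl fun y hy => ?_
          have : ∀ z ∈ sm, (a y * b z) * ∫ ω, ξ y ω * ξ z ω ∂μ
              = if y = z then a y * b z else 0 := by
            intro z _
            rw [hCov y z]
            by_cases h : y = z <;> simp [h]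
          rw [Finset.sum_congr rfl this, Finset.sum_ite_eq sm y (fun z => a y * b z),
            if_pos (hsub hy)]
      _ = ∑ y ∈ sn, a y ^ 2 := by
          refine Finset.sum_congr rfl fun y hy => ?_
          have hymem : y ∈ cluster F n := (cluster_finite F n).mem_toFinset.mp hy
          rw [hb, qstar_agree F hP ht f hnm hymem, ← ha, pow_two]
      _ = ∑ᶠ x ∈ cluster F n, (hadQstar F P R t n f x) ^ 2 :=
          (finsum_mem_eq_finite_toFinset_sum _ (cluster_finite F n)).symm

end
end
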